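/- Let G_w be a weighted bicyclic graph. Then the rank of A(G_w) equals 2 if and only if G_w is isomorphic as a weighted graph to weighted θ(1,1,1) — the complete bipartite graph K_{2,3} with parts {u,v} and {x_1,x_2,x_3} — whose weights satisfy w(ux_1)·w(x_2v) = w(ux_2)·w(x_1v) and w(ux_1)·w(x_3v) = w(ux_3)·w(x_1v). -/

import Mathlib

open Matrix

/-- The positive inertia index of a matrix: the number of positive eigenvalues
(counted with multiplicity) if the matrix is Hermitian, and `0` otherwise. -/
noncomputable def posInertia {k 𝕜 : Type*} [RCLike 𝕜] [Fintype k] [DecidableEq k]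
    (A : Matrix k k 𝕜) : ℕ :=
  if h : A.IsHermitian then Fintype.card {i // 0 < h.eigenvalues i} else 0

/-- The negative inertia index of a matrix. -/
noncomputable def negInertia {k 𝕜 : Type*} [RCLike 𝕜] [Fintype k] [DecidableEq k]
    (A : Matrix k k 𝕜) : ℕ :=
  if h : A.IsHermitian then Fintype.card {i // h.eigenvalues i < 0} else 0

/-- The nullity of a matrix: the number of zero eigenvalues. -/
noncomputable def nulInertia {k 𝕜 : Type*} [RCLike 𝕜] [Fintype k] [DecidableEq k]
    (A : Matrix k k 𝕜) : ℕ :=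
  if h : A.IsHermitian then Fintype.card {i // h.eigenvalues i = 0} else 0

/-- A weighted graph: a simple graph together with a symmetric weight function
which is positive on all edges. -/
structure WeightedGraph (V : Type*) where
  G : SimpleGraph V
  w : V → V → ℝ
  symm : ∀ u v : V, w u v = w v u
  pos : ∀ u v : V, G.Adj u v → 0 < w u v

open Classical in
/-- The (weighted) adjacency matrix of a weighted graph. -/
noncomputable def WeightedGraph.adjMatrix {V : Type*} [Fintype V] [DecidableEq V]
    (W : WeightedGraph V) : Matrix V V ℝ :=
  fun a b => if W.G.Adj a b then W.w a b else 0

/-- `i₊`, the number of positive eigenvalues of the adjacency matrix. -/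
noncomputable def WeightedGraph.iPos {V : Type*} [Fintype V] [DecidableEq V]
    (W : WeightedGraph V) : ℕ := posInertia W.adjMatrix

/-- `i₋`, the number of negative eigenvalues of the adjacency matrix. -/
noncomputable def WeightedGraph.iNeg {V : Type*} [Fintype V] [DecidableEq V]
    (W : WeightedGraph V) : ℕ := negInertia W.adjMatrix

/-- `i₀`, the number of zero eigenvalues of the adjacency matrix. -/
noncomputable def WeightedGraph.iNul {V : Type*} [Fintype V] [DecidableEq V]
    (W : WeightedGraph V) : ℕ := nulInertia W.adjMatrix

/-- A weighted graph is bicyclic if its underlying graph is connected and has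
exactly one more edge than vertices. -/
def WeightedGraph.IsBicyclic {V : Type*} [Fintype V] (W : WeightedGraph V) : Prop :=
  W.G.Connected ∧ W.G.edgeSet.ncard = Fintype.card V + 1

/-- The graph has a pendant vertex (a vertex of degree one). -/
def WeightedGraph.HasPendant {V : Type*} (W : WeightedGraph V) : Prop :=
  ∃ x : V, (W.G.neighborSet x).ncard = 1

/-- The graph has no pendant vertices. -/
def WeightedGraph.NoPendant {V : Type*} (W : WeightedGraph V) : Prop :=
  ∀ x : V, (W.G.neighborSet x).ncard ≠ 1

/-- The base of `G` is (isomorphic to) `H`: some induced subgraph of `G` is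
isomorphic to `H`.  (For a bicyclic graph `G` and a bicyclic graph `H` without
pendant vertices this induced subgraph is necessarily the unique base of `G`.) -/
def BaseIsoTo {V B : Type*} (G : SimpleGraph V) (H : SimpleGraph B) : Prop :=
  ∃ S : Set V, Nonempty ((G.induce S) ≃g H)

/-- Vertex labels of the connecting path of `∞(p,l,q)`: the path starts at the
vertex `0` of the first cycle `0, 1, …, p-1`, and its further vertices are
`p, p+1, …`. -/
def pathVert (p j : ℕ) : ℕ := if j = 0 then 0 else p - 1 + j

/-- Vertex labels of the second cycle of `∞(p,l,q)`: it starts at the last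
vertex of the connecting path and continues with `p+l-1, p+l, …`. -/
def infCyc2Vert (p l k : ℕ) : ℕ := if k = 0 then pathVert p (l - 1) else p + l - 2 + k

/-- The edge relation of `∞(p,l,q)` on the vertex labels `0, …, p+q+l-3`:
the first cycle on `0, …, p-1`, the connecting path (on `l` vertices) from the
vertex `0`, and the second cycle attached at the last path vertex. -/
def infinityRel (p l q a b : ℕ) : Prop :=
  (a + 1 < p ∧ b = a + 1) ∨ (a = 0 ∧ b = p - 1) ∨
  (∃ j, j + 1 < l ∧ a = pathVert p j ∧ b = pathVert p (j + 1)) ∨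
  (∃ k, k + 1 < q ∧ a = infCyc2Vert p l k ∧ b = infCyc2Vert p l (k + 1)) ∨
  (a = infCyc2Vert p l 0 ∧ b = infCyc2Vert p l (q - 1))

/-- The graph `∞(p,l,q)`: two vertex-disjoint cycles of lengths `p` and `q`
joined by a path on `l` vertices (whose endpoints are identified with one
vertex on each cycle).  It has `p + q + l - 2` vertices. -/
def infinityGraph (p l q : ℕ) : SimpleGraph (Fin (p + q + l - 2)) :=
  SimpleGraph.fromRel (fun a b => infinityRel p l q a.1 b.1)

/-- The edge relation of one of the three `u,v`-paths of `θ(p,l,q)` having `m`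
internal vertices, the internal vertices being labelled `o, o+1, …, o+m-1`
(`u` is the vertex `0` and `v` is the vertex `1`). -/
def thetaPathRel (m o a b : ℕ) : Prop :=
  if m = 0 then a = 0 ∧ b = 1
  else (a = 0 ∧ b = o) ∨ (∃ i, i + 1 < m ∧ a = o + i ∧ b = o + i + 1) ∨ (a = o + m - 1 ∧ b = 1)

/-- The graph `θ(p,l,q)`: two vertices `u = 0` and `v = 1` joined by three
internally disjoint paths with `p`, `l`, `q` internal vertices respectively.
It has `p + l + q + 2` vertices. -/
def thetaGraph (p l q : ℕ) : SimpleGraph (Fin (p + l + q + 2)) :=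
  SimpleGraph.fromRel (fun a b =>
    thetaPathRel p 2 a.1 b.1 ∨ thetaPathRel l (p + 2) a.1 b.1 ∨
      thetaPathRel q (p + l + 2) a.1 b.1)

/-- The edge set of `G` is exactly the (symmetrized) list `E`. -/
def adjSpec {V : Type*} (G : SimpleGraph V) (E : List (V × V)) : Prop :=
  ∀ a b : V, G.Adj a b ↔ ((a, b) ∈ E ∨ (b, a) ∈ E)

/-- The weighted subgraph induced on a set `S` of vertices. -/
def WeightedGraph.induce {V : Type*} (W : WeightedGraph V) (S : Set V) : WeightedGraph S where
  G := W.G.induce S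
  w := fun a b => W.w a b
  symm := fun a b => W.symm a b
  pos := fun a b h => W.pos a b h

/-- The `k`-th vertex (mod `n`) of a cycle on `Fin n`. -/
def cycVert (n : ℕ) (hn : 0 < n) (k : ℕ) : Fin n := ⟨k % n, Nat.mod_lt _ hn⟩

/-- `W` is the weighted graph `θ(1,1,1)` (i.e. `K_{2,3}`) with parts `{u, v}`
and `{x1, x2, x3}`. -/
def Theta111Shape {V : Type*} (W : WeightedGraph V) (u v x1 x2 x3 : V) : Prop :=
  [u, v, x1, x2, x3].Nodup ∧ (∀ z : V, z ∈ [u, v, x1, x2, x3]) ∧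
    adjSpec W.G [(u, x1), (u, x2), (u, x3), (x1, v), (x2, v), (x3, v)]

/-- `W` is the weighted graph `θ(1,0,1)` on vertices `u, v, x1, x2` with edges
`uv, ux1, x1v, ux2, x2v`. -/
def Theta101Shape {V : Type*} (W : WeightedGraph V) (u v x1 x2 : V) : Prop :=
  [u, v, x1, x2].Nodup ∧ (∀ z : V, z ∈ [u, v, x1, x2]) ∧
    adjSpec W.G [(u, v), (u, x1), (x1, v), (u, x2), (x2, v)]

/-- `W` is the weighted graph `θ(1,0,2)` on vertices `u, v, x, y, z` with edges
`uv, ux, xv, uy, yz, zv`. -/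
def Theta102Shape {V : Type*} (W : WeightedGraph V) (u v x y z : V) : Prop :=
  [u, v, x, y, z].Nodup ∧ (∀ t : V, t ∈ [u, v, x, y, z]) ∧
    adjSpec W.G [(u, v), (u, x), (x, v), (u, y), (y, z), (z, v)]

/-- `W` is the weighted graph `θ(2,0,2)` on vertices `u, v, x1, x2, y1, y2`
with edges `uv, ux1, x1x2, x2v, uy1, y1y2, y2v`. -/
def Theta202Shape {V : Type*} (W : WeightedGraph V) (u v x1 x2 y1 y2 : V) : Prop :=
  [u, v, x1, x2, y1, y2].Nodup ∧ (∀ t : V, t ∈ [u, v, x1, x2, y1, y2]) ∧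
    adjSpec W.G [(u, v), (u, x1), (x1, x2), (x2, v), (u, y1), (y1, y2), (y2, v)]

/-- `W` is the weighted graph `θ(1,1,2)` on vertices `u, v, x1, x2, y1, y2`
with edges `ux1, x1v, ux2, x2v, uy1, y1y2, y2v`. -/
def Theta112Shape {V : Type*} (W : WeightedGraph V) (u v x1 x2 y1 y2 : V) : Prop :=
  [u, v, x1, x2, y1, y2].Nodup ∧ (∀ t : V, t ∈ [u, v, x1, x2, y1, y2]) ∧
    adjSpec W.G [(u, x1), (x1, v), (u, x2), (x2, v), (u, y1), (y1, y2), (y2, v)]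

/-- `W` is the weighted graph `∞(3,1,3)`: two triangles sharing the vertex `c`. -/
def Inf313Shape {V : Type*} (W : WeightedGraph V) (c a1 a2 b1 b2 : V) : Prop :=
  [c, a1, a2, b1, b2].Nodup ∧ (∀ t : V, t ∈ [c, a1, a2, b1, b2]) ∧
    adjSpec W.G [(c, a1), (a1, a2), (a2, c), (c, b1), (b1, b2), (b2, c)]

/-- `W` is the weighted graph `∞(3,2,3)`: the triangle `u,x,y` and the triangle
`v,s,t`, joined by the edge `uv`. -/
def Inf323Shape {V : Type*} (W : WeightedGraph V) (u v x y s t : V) : Prop :=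
  [u, v, x, y, s, t].Nodup ∧ (∀ z : V, z ∈ [u, v, x, y, s, t]) ∧
    adjSpec W.G [(u, x), (x, y), (y, u), (v, s), (s, t), (t, v), (u, v)]

/-- `W` is the weighted graph `∞(3,1,4)`: the triangle `c,x,y` and the
quadrilateral `c,z1,z2,z3` sharing the vertex `c`. -/
def Inf314Shape {V : Type*} (W : WeightedGraph V) (c x y z1 z2 z3 : V) : Prop :=
  [c, x, y, z1, z2, z3].Nodup ∧ (∀ t : V, t ∈ [c, x, y, z1, z2, z3]) ∧
    adjSpec W.G [(c, x), (x, y), (y, c), (c, z1), (z1, z2), (z2, z3), (z3, c)]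

/-- `W` is the weighted graph `∞(4,1,4)`: the quadrilaterals `c,x1,x2,x3` and
`c,y1,y2,y3` sharing the vertex `c`. -/
def Inf414Shape {V : Type*} (W : WeightedGraph V) (c x1 x2 x3 y1 y2 y3 : V) : Prop :=
  [c, x1, x2, x3, y1, y2, y3].Nodup ∧ (∀ t : V, t ∈ [c, x1, x2, x3, y1, y2, y3]) ∧
    adjSpec W.G [(c, x1), (x1, x2), (x2, x3), (x3, c), (c, y1), (y1, y2), (y2, y3), (y3, c)]

/-!
Pick an edge `ab`. If the weighted adjacency matrix `A` has rank two, every `3 × 3` minor on rows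
`a, b, i` and columns `a, b, j` vanishes; since `A a a = A b b = 0` that minor is `A a b` times the
defect of the pivot expansion `A a b * A i j = A i a * A b j + A i b * A a j`. On the diagonal the
expansion forbids common neighbours of `a` and `b`; off the diagonal it makes the graph complete
bipartite between `N(b)` and `N(a)`, with every block of `A` of rank one. A complete bipartite
`K_{p,q}` has `p + q + 1` edges only if `(p - 1)(q - 1) = 2`, so it is `K_{2,3}`, and the rank-one
blocks give the weight conditions. Conversely, on `K_{2,3}` the weight conditions make the pivot
expansion hold, and the expansion factors `A` through a space of dimension two.
-/

theorem Nat.eq_two_three_of_mul_eq_add_add_one {p q : ℕ} (h : p * q = p + q + 1) :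
    p = 2 ∧ q = 3 ∨ p = 3 ∧ q = 2 := by
  have hq : 2 ≤ q := by
    by_contra! hq
    interval_cases q <;> omega
  have hp : p ≤ 3 := by nlinarith
  interval_cases p <;> omega

namespace SimpleGraph

variable {V : Type*} {G : SimpleGraph V} {s : Set V}

def IsCompleteBipartiteWith (G : SimpleGraph V) (s : Set V) : Prop :=
  ∀ x y, G.Adj x y ↔ (x ∈ s ↔ y ∉ s)

theorem IsCompleteBipartiteWith.compl (h : G.IsCompleteBipartiteWith s) :
    G.IsCompleteBipartiteWith sᶜ := fun x y => by
  rw [h, Set.mem_compl_iff, Set.mem_compl_iff]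
  tauto

theorem IsCompleteBipartiteWith.edgeSet_eq (h : G.IsCompleteBipartiteWith s) :
    G.edgeSet = (fun p : V × V => s(p.1, p.2)) '' (s ×ˢ sᶜ) := by
  ext e
  induction e using Sym2.ind with
  | _ x y =>
    rw [mem_edgeSet, h]
    simp only [Set.mem_image, Set.mem_prod, Set.mem_compl_iff, Prod.exists, Sym2.eq_iff]
    constructor
    · intro hxy
      by_cases hx : x ∈ s
      · exact ⟨x, y, ⟨hx, hxy.mp hx⟩, Or.inl ⟨rfl, rfl⟩⟩
      · exact ⟨y, x, ⟨by tauto, hx⟩, Or.inr ⟨rfl, rfl⟩⟩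
    · rintro ⟨x', y', ⟨hx', hy'⟩, ⟨rfl, rfl⟩ | ⟨rfl, rfl⟩⟩ <;> tauto

theorem IsCompleteBipartiteWith.ncard_edgeSet (h : G.IsCompleteBipartiteWith s) :
    G.edgeSet.ncard = s.ncard * sᶜ.ncard := by
  rw [h.edgeSet_eq, Set.InjOn.ncard_image, Set.ncard_prod]
  rintro ⟨x, y⟩ ⟨hx, hy⟩ ⟨x', y'⟩ ⟨hx', hy'⟩ hxy
  simp only [Sym2.eq_iff] at hxy
  rcases hxy with ⟨rfl, rfl⟩ | ⟨rfl, rfl⟩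
  · rfl
  · exact absurd hx hy'

end SimpleGraph

namespace Matrix

variable {K n : Type*} [Field K] {A : Matrix n n K} {a b : n}

def IsPivotExpansion (A : Matrix n n K) (a b : n) : Prop :=
  ∀ i j, A a b * A i j = A i a * A b j + A i b * A a j

theorem le_rank_of_det_submatrix_ne_zero [Fintype n] {k : ℕ} (r c : Fin k → n)
    (h : (A.submatrix r c).det ≠ 0) : k ≤ A.rank := by
  simpa [rank_of_det_ne_zero h] using A.rank_submatrix_le r c

theorem rank_eq_two_iff_of_pivot [Fintype n] (ha : A a a = 0) (hb : A b b = 0)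
    (hba : A b a = A a b) (hab : A a b ≠ 0) : A.rank = 2 ↔ A.IsPivotExpansion a b := by
  have two_le : 2 ≤ A.rank := le_rank_of_det_submatrix_ne_zero ![a, b] ![a, b] <| by
    rw [det_fin_two]
    simp [ha, hb, hba, hab]
  constructor
  · intro hrank i j
    have hdet : (A.submatrix ![a, b, i] ![a, b, j]).det = 0 := by
      by_contra hne
      have := le_rank_of_det_submatrix_ne_zero _ _ hne
      omega
    simp only [det_fin_three, submatrix_apply, Matrix.cons_val, ha, hb, hba] at hdet
    have : A a b * (A a b * A i j - A i a * A b j - A i b * A a j) = 0 := by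
      linear_combination -hdet
    simpa [sub_eq_zero, sub_sub, add_comm] using (mul_eq_zero.1 this).resolve_left hab
  · intro hid
    refine le_antisymm ?_ two_le
    have hfactor : A = (of fun i k => ![A i a, A i b] k) *
        of ![fun j => A b j / A a b, fun j => A a j / A a b] := by
      ext i j
      simp only [mul_apply, of_apply, Fin.sum_univ_two, Matrix.cons_val]
      field_simp
      linear_combination hid i j
    rw [hfactor]
    exact (rank_mul_le_left _ _).trans ((rank_le_card_width _).trans_eq (Fintype.card_fin 2))

theorem isPivotExpansion_of_bipartite (hA : A.IsSymm) {s : Set n}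
    (hzero : ∀ i j, (i ∈ s ↔ j ∈ s) → A i j = 0) (ha : a ∈ s) (hb : b ∉ s)
    (hrankOne : ∀ i ∈ s, ∀ j ∉ s, A a b * A i j = A i b * A a j) :
    A.IsPivotExpansion a b := by
  intro i j
  by_cases hi : i ∈ s <;> by_cases hj : j ∈ s
  · simp [hzero i j (by tauto), hzero i a (by tauto), hzero a j (by tauto)]
  · rw [hzero i a (by tauto), hrankOne i hi j hj, zero_mul, zero_add]
  · rw [hzero i b (by tauto), zero_mul, add_zero, ← hA.apply i j, hA.apply a i, hA.apply j b,
      hrankOne j hj i hi, mul_comm]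
  · simp [hzero i j (by tauto), hzero i b (by tauto), hzero b j (by tauto)]

theorem IsPivotExpansion.mul_eq_mul (hid : A.IsPivotExpansion a b) (hab : A a b ≠ 0) {i i' : n}
    (h : A i a = 0 ∧ A i' a = 0 ∨ A i b = 0 ∧ A i' b = 0) (j j' : n) :
    A i j * A i' j' = A i j' * A i' j := by
  have e := hid i
  have e' := hid i'
  refine mul_left_cancel₀ (pow_ne_zero 2 hab) ?_
  rcases h with ⟨hi, hi'⟩ | ⟨hi, hi'⟩
  · simp only [hi, hi', zero_mul, zero_add] at e e'
    linear_combination A a b * A i' j' * e j + A i b * A a j * e' j'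
      - A a b * A i' j * e j' - A i b * A a j' * e' j
  · simp only [hi, hi', zero_mul, add_zero] at e e'
    linear_combination A a b * A i' j' * e j + A i a * A b j * e' j'
      - A a b * A i' j * e j' - A i a * A b j' * e' j

end Matrix

theorem adjSpec_theta111_iff {V : Type*} {G : SimpleGraph V} {u v x1 x2 x3 : V}
    (hnodup : [u, v, x1, x2, x3].Nodup) (hcover : ∀ z : V, z ∈ [u, v, x1, x2, x3]) :
    adjSpec G [(u, x1), (u, x2), (u, x3), (x1, v), (x2, v), (x3, v)] ↔
      G.IsCompleteBipartiteWith {u, v} := by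
  refine forall₂_congr fun i j => iff_congr Iff.rfl ?_
  have hi := hcover i
  have hj := hcover j
  simp only [List.nodup_cons, List.mem_cons, List.not_mem_nil, or_false, not_or, Prod.mk.injEq,
    Set.mem_insert_iff, Set.mem_singleton_iff] at hnodup hi hj ⊢
  grind

namespace WeightedGraph

variable {V : Type*} [Fintype V] [DecidableEq V] (W : WeightedGraph V) {a b : V}

theorem adjMatrix_of_adj (h : W.G.Adj a b) : W.adjMatrix a b = W.w a b := by
  simp [adjMatrix, h]

theorem adjMatrix_of_not_adj (h : ¬W.G.Adj a b) : W.adjMatrix a b = 0 := by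
  simp [adjMatrix, h]

theorem adjMatrix_ne_zero_iff : W.adjMatrix a b ≠ 0 ↔ W.G.Adj a b := by
  by_cases h : W.G.Adj a b
  · simpa [W.adjMatrix_of_adj h, h] using (W.pos a b h).ne'
  · simp [W.adjMatrix_of_not_adj h, h]

theorem adjMatrix_eq_zero_iff : W.adjMatrix a b = 0 ↔ ¬W.G.Adj a b :=
  W.adjMatrix_ne_zero_iff.not_right

theorem adjMatrix_self (a : V) : W.adjMatrix a a = 0 :=
  W.adjMatrix_of_not_adj W.G.irrefl

theorem isSymm_adjMatrix : W.adjMatrix.IsSymm := by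
  refine Matrix.IsSymm.ext fun i j => ?_
  by_cases h : W.G.Adj i j
  · rw [W.adjMatrix_of_adj h, W.adjMatrix_of_adj h.symm, W.symm]
  · rw [W.adjMatrix_of_not_adj h, W.adjMatrix_of_not_adj (mt W.G.adj_symm h)]

theorem rank_adjMatrix_eq_two_iff (hab : W.G.Adj a b) :
    W.adjMatrix.rank = 2 ↔ W.adjMatrix.IsPivotExpansion a b :=
  Matrix.rank_eq_two_iff_of_pivot (W.adjMatrix_self a) (W.adjMatrix_self b)
    (W.isSymm_adjMatrix.apply a b) (W.adjMatrix_ne_zero_iff.2 hab)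

variable {W}

theorem isCompleteBipartiteWith_of_isPivotExpansion (hconn : W.G.Connected) (hab : W.G.Adj a b)
    (hid : W.adjMatrix.IsPivotExpansion a b) :
    W.G.IsCompleteBipartiteWith {x | W.G.Adj x b} := by
  have hA : ∀ {i j}, W.adjMatrix i j ≠ 0 ↔ W.G.Adj i j := W.adjMatrix_ne_zero_iff
  have no_common : ∀ i, ¬(W.G.Adj i a ∧ W.G.Adj i b) := by
    rintro i ⟨hia, hib⟩
    have hii := hid i i
    rw [W.adjMatrix_self, mul_zero, W.isSymm_adjMatrix.apply i b,
      W.isSymm_adjMatrix.apply i a] at hii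
    exact mul_ne_zero (hA.2 hia) (hA.2 hib) (by linear_combination -hii / 2)
  have hadj : ∀ i j,
      W.G.Adj i j ↔ W.G.Adj i a ∧ W.G.Adj b j ∨ W.G.Adj i b ∧ W.G.Adj a j := by
    intro i j
    rw [← hA, ← mul_ne_zero_iff_left (hA.2 hab), hid]
    by_cases hia : W.G.Adj i a
    · have hib : ¬W.G.Adj i b := fun h => no_common i ⟨hia, h⟩
      simp [W.adjMatrix_of_not_adj hib, hia, hib, W.adjMatrix_eq_zero_iff]
    · simp [W.adjMatrix_of_not_adj hia, hia, W.adjMatrix_eq_zero_iff]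
  have hcover : ∀ i, W.G.Adj i a ∨ W.G.Adj i b := by
    intro i
    have : Nontrivial V := ⟨⟨a, b, hab.ne⟩⟩
    obtain ⟨j, hij⟩ := hconn.preconnected.exists_adj_of_nontrivial i
    rcases (hadj i j).1 hij with h | h
    exacts [Or.inl h.1, Or.inr h.1]
  intro x y
  simp only [Set.mem_ofPred_eq, hadj x y, W.G.adj_comm b, W.G.adj_comm a]
  grind

variable {s : Set V} {i j : V}

theorem adjMatrix_eq_zero_of_isCompleteBipartiteWith (hbip : W.G.IsCompleteBipartiteWith s)
    (h : i ∈ s ↔ j ∈ s) : W.adjMatrix i j = 0 :=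
  W.adjMatrix_of_not_adj <| by rw [hbip]; tauto

theorem adjMatrix_eq_w_of_isCompleteBipartiteWith (hbip : W.G.IsCompleteBipartiteWith s)
    (hi : i ∈ s) (hj : j ∉ s) : W.adjMatrix i j = W.w i j :=
  W.adjMatrix_of_adj <| (hbip i j).2 (iff_of_true hi hj)

theorem exists_theta111Shape_of_isCompleteBipartiteWith (hbip : W.G.IsCompleteBipartiteWith s)
    (hs : s.ncard = 2) (hsc : sᶜ.ncard = 3)
    (hminor : ∀ i ∈ s, ∀ i' ∈ s, ∀ j j',
      W.adjMatrix i j * W.adjMatrix i' j' = W.adjMatrix i j' * W.adjMatrix i' j) :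
    ∃ u v x1 x2 x3 : V, Theta111Shape W u v x1 x2 x3 ∧
      W.w u x1 * W.w x2 v = W.w u x2 * W.w x1 v ∧
      W.w u x1 * W.w x3 v = W.w u x3 * W.w x1 v := by
  obtain ⟨u, v, huv, rfl⟩ := Set.ncard_eq_two.1 hs
  obtain ⟨x1, x2, x3, h12, h13, h23, hx⟩ := Set.ncard_eq_three.1 hsc
  have hxs : ∀ z, z ∉ ({u, v} : Set V) ↔ z = x1 ∨ z = x2 ∨ z = x3 := fun z => by
    rw [← Set.mem_compl_iff, hx]
    simp only [Set.mem_insert_iff, Set.mem_singleton_iff]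
  have hu : u ∈ ({u, v} : Set V) := by simp
  have hv : v ∈ ({u, v} : Set V) := by simp
  have hx1 : x1 ∉ ({u, v} : Set V) := (hxs x1).2 (by simp)
  have hx2 : x2 ∉ ({u, v} : Set V) := (hxs x2).2 (by simp)
  have hx3 : x3 ∉ ({u, v} : Set V) := (hxs x3).2 (by simp)
  have hweight : ∀ x ∉ ({u, v} : Set V), W.w u x1 * W.w x v = W.w u x * W.w x1 v := by
    intro x hxuv
    have := hminor u hu v hv x1 x
    rwa [adjMatrix_eq_w_of_isCompleteBipartiteWith hbip hu hx1,
      adjMatrix_eq_w_of_isCompleteBipartiteWith hbip hv hxuv,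
      adjMatrix_eq_w_of_isCompleteBipartiteWith hbip hu hxuv,
      adjMatrix_eq_w_of_isCompleteBipartiteWith hbip hv hx1, W.symm v, W.symm v] at this
  have hnodup : [u, v, x1, x2, x3].Nodup := by
    simp only [Set.mem_insert_iff, Set.mem_singleton_iff, not_or] at hx1 hx2 hx3
    simp only [List.nodup_cons, List.mem_cons, List.not_mem_nil, or_false, not_or]
    grind
  have hcover : ∀ z : V, z ∈ [u, v, x1, x2, x3] := fun z => by
    have := hxs z
    simp only [List.mem_cons, List.not_mem_nil, or_false, Set.mem_insert_iff,
      Set.mem_singleton_iff] at this ⊢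
    tauto
  refine ⟨u, v, x1, x2, x3, ⟨hnodup, hcover, (adjSpec_theta111_iff hnodup hcover).2 hbip⟩,
    hweight x2 hx2, hweight x3 hx3⟩

theorem exists_theta111Shape_of_rank_eq_two (hbic : W.IsBicyclic)
    (hrank : W.adjMatrix.rank = 2) :
    ∃ u v x1 x2 x3 : V, Theta111Shape W u v x1 x2 x3 ∧
      W.w u x1 * W.w x2 v = W.w u x2 * W.w x1 v ∧
      W.w u x1 * W.w x3 v = W.w u x3 * W.w x1 v := by
  obtain ⟨hconn, hcard⟩ := hbic
  obtain ⟨a, b, hab⟩ : ∃ a b, W.G.Adj a b :=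
    W.G.ne_bot_iff_exists_adj.1 fun h => by simp [h] at hcard
  have hid := (W.rank_adjMatrix_eq_two_iff hab).1 hrank
  set s : Set V := {x | W.G.Adj x b}
  have hbip : W.G.IsCompleteBipartiteWith s :=
    isCompleteBipartiteWith_of_isPivotExpansion hconn hab hid
  have ha : a ∈ s := hab
  have hb : b ∉ s := W.G.irrefl
  have hA : W.adjMatrix a b ≠ 0 := W.adjMatrix_ne_zero_iff.2 hab
  have hzero {i j : V} : (i ∈ s ↔ j ∈ s) → W.adjMatrix i j = 0 :=
    adjMatrix_eq_zero_of_isCompleteBipartiteWith hbip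
  have hminor : ∀ i ∈ s, ∀ i' ∈ s, ∀ j j',
      W.adjMatrix i j * W.adjMatrix i' j' = W.adjMatrix i j' * W.adjMatrix i' j :=
    fun i hi i' hi' => hid.mul_eq_mul hA
      (.inl ⟨hzero (iff_of_true hi ha), hzero (iff_of_true hi' ha)⟩)
  have hminor' : ∀ i ∈ sᶜ, ∀ i' ∈ sᶜ, ∀ j j',
      W.adjMatrix i j * W.adjMatrix i' j' = W.adjMatrix i j' * W.adjMatrix i' j :=
    fun i hi i' hi' => hid.mul_eq_mul hA
      (.inr ⟨hzero (iff_of_false hi hb), hzero (iff_of_false hi' hb)⟩)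
  have hcount : s.ncard * sᶜ.ncard = s.ncard + sᶜ.ncard + 1 := by
    rw [← hbip.ncard_edgeSet, Set.ncard_add_ncard_compl, hcard, Nat.card_eq_fintype_card]
  rcases Nat.eq_two_three_of_mul_eq_add_add_one hcount with ⟨h2, h3⟩ | ⟨h3, h2⟩
  · exact exists_theta111Shape_of_isCompleteBipartiteWith hbip h2 h3 hminor
  · exact exists_theta111Shape_of_isCompleteBipartiteWith hbip.compl h2
      (by rwa [compl_compl]) hminor'

theorem rank_adjMatrix_eq_two_of_theta111Shape {u v x1 x2 x3 : V}
    (hshape : Theta111Shape W u v x1 x2 x3) (h2 : W.w u x1 * W.w x2 v = W.w u x2 * W.w x1 v)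
    (h3 : W.w u x1 * W.w x3 v = W.w u x3 * W.w x1 v) :
    W.adjMatrix.rank = 2 := by
  obtain ⟨hnodup, hcover, hadj⟩ := hshape
  have hbip := (adjSpec_theta111_iff hnodup hcover).1 hadj
  have hu : u ∈ ({u, v} : Set V) := by simp
  have hx1 : x1 ∉ ({u, v} : Set V) := by
    simp only [List.nodup_cons, List.mem_cons] at hnodup
    simp only [Set.mem_insert_iff, Set.mem_singleton_iff]
    grind
  have hab : W.G.Adj u x1 := (hbip u x1).2 (iff_of_true hu hx1)
  refine (W.rank_adjMatrix_eq_two_iff hab).2 <| Matrix.isPivotExpansion_of_bipartite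
    W.isSymm_adjMatrix (fun i j => adjMatrix_eq_zero_of_isCompleteBipartiteWith hbip) hu hx1 ?_
  intro i hi j hj
  rw [adjMatrix_eq_w_of_isCompleteBipartiteWith hbip hu hx1,
    adjMatrix_eq_w_of_isCompleteBipartiteWith hbip hi hj,
    adjMatrix_eq_w_of_isCompleteBipartiteWith hbip hi hx1,
    adjMatrix_eq_w_of_isCompleteBipartiteWith hbip hu hj]
  have hj' := hcover j
  simp only [Set.mem_insert_iff, Set.mem_singleton_iff, not_or] at hi hj
  simp only [List.mem_cons, List.not_mem_nil, or_false] at hj'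
  rcases hi with rfl | rfl
  · ring
  rcases hj' with rfl | rfl | rfl | rfl | rfl
  · exact absurd rfl hj.1
  · exact absurd rfl hj.2
  · ring
  · rw [W.symm i, W.symm i]
    linear_combination h2
  · rw [W.symm i, W.symm i]
    linear_combination h3

end WeightedGraph

/-- the weighted bicyclic graphs of rank `2`. -/
theorem stmt11 {V : Type*} [Fintype V] [DecidableEq V] (W : WeightedGraph V)
    (hbic : W.IsBicyclic) :
    W.adjMatrix.rank = 2 ↔
      (∃ u v x1 x2 x3 : V, Theta111Shape W u v x1 x2 x3 ∧
        W.w u x1 * W.w x2 v = W.w u x2 * W.w x1 v ∧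
        W.w u x1 * W.w x3 v = W.w u x3 * W.w x1 v) := by
  refine ⟨W.exists_theta111Shape_of_rank_eq_two hbic, ?_⟩
  rintro ⟨u, v, x1, x2, x3, hshape, h2, h3⟩
  exact W.rank_adjMatrix_eq_two_of_theta111Shape hshape h2 h3
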